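/- arXiv:1404.2183 — 2 statements merged into one kernel-verified Lean document; each statement's English description precedes it below -/
import Mathlib

section
/- For every integer n ≥ 2, kMax(n) ≤ 2·n^β, where β = log 3 / log 2 − 1 ≈ 0.584963 and n^β is a real power. -/
/-- `HasCpx n k` means the positive integer `n` can be written using exactly `k` ones,
additions and multiplications. -/
inductive HasCpx : ℕ → ℕ → Prop
  | one : HasCpx 1 1
  | add {a b j k : ℕ} : HasCpx a j → HasCpx b k → HasCpx (a + b) (j + k)
  | mul {a b j k : ℕ} : HasCpx a j → HasCpx b k → HasCpx (a * b) (j + k)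

/-- The integer complexity `‖n‖`: the least number of 1's needed to write `n` using
only `+` and `*`.  By convention (`sInf ∅ = 0` in `ℕ`) we have `cpx 0 = 0`. -/
noncomputable def cpx (n : ℕ) : ℕ := sInf {k | HasCpx n k}

/-- The function `E`: `E k` is the largest integer of complexity `k` (OEIS A000792),
with `E 0 = 1`.  It satisfies `E 0 = E 1 = 1`, `E 2 = 2`, and for `j ≥ 1`:
`E (3j) = 3^j`, `E (3j+1) = 4·3^(j-1)`, `E (3j+2) = 2·3^j`. -/
def E : ℕ → ℕ
  | 0 => 1
  | 1 => 1
  | 2 => 2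
  | 3 => 3
  | 4 => 4
  | (n + 5) => 3 * E (n + 2)

/-- `te n` is the largest integer `t` with `0 ≤ t ≤ ⌊‖n-1‖/2⌋` such that
`E t + E (‖n-1‖ - t) ≥ n` (as a supremum in `ℕ`). -/
noncomputable def te (n : ℕ) : ℕ :=
  sSup {t : ℕ | t ≤ cpx (n - 1) / 2 ∧ n ≤ E t + E (cpx (n - 1) - t)}

/-- `kMax n = E (te n)`. -/
noncomputable def kMax (n : ℕ) : ℕ := E (te n)

lemma E_five (n : ℕ) : E (n + 5) = 3 * E (n + 2) := by simp [E]

lemma E_pos : ∀ k, 0 < E k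
  | 0 => by decide
  | 1 => by decide
  | 2 => by decide
  | 3 => by decide
  | 4 => by decide
  | (k+5) => by rw [E_five]; have := E_pos (k+2); omega

lemma E_le_succ : ∀ k, E k ≤ E (k+1)
  | 0 => by decide
  | 1 => by decide
  | 2 => by decide
  | 3 => by decide
  | 4 => by decide
  | (k+5) => by
      have h : E (k+2) ≤ E (k+3) := E_le_succ (k+2)
      have h1 : E (k+5) = 3 * E (k+2) := E_five k
      have h2 : E (k+5+1) = 3 * E (k+3) := E_five (k+1)
      omega

lemma E_mono : Monotone E := monotone_nat_of_le_succ E_le_succ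

lemma two_E_le : ∀ k, 2 * E k ≤ E (k+2)
  | 0 => by decide
  | 1 => by decide
  | 2 => by decide
  | 3 => by decide
  | 4 => by decide
  | (k+5) => by
      have h : 2 * E (k+2) ≤ E (k+4) := two_E_le (k+2)
      have h1 : E (k+5) = 3 * E (k+2) := E_five k
      have h2 : E (k+5+2) = 3 * E (k+4) := E_five (k+2)
      omega

lemma three_E_le : ∀ k, 3 * E k ≤ E (k+3)
  | 0 => by decide
  | 1 => by decide
  | (k+2) => le_of_eq (E_five k).symm

lemma E_succ_add_one : ∀ k, E (k+1) + 1 ≤ E (k+2)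
  | 0 => by decide
  | 1 => by decide
  | 2 => by decide
  | 3 => by decide
  | (k+4) => by
      have h : E (k+2) + 1 ≤ E (k+3) := E_succ_add_one (k+1)
      have h1 : E (k+4+1) = 3 * E (k+2) := E_five k
      have h2 : E (k+4+2) = 3 * E (k+3) := E_five (k+1)
      omega

lemma E_mul_le : ∀ j k, E j * E k ≤ E (j + k)
  | 0, k => by simpa [E] using le_refl (E k)
  | 1, k => by simpa [E, Nat.add_comm] using E_le_succ k
  | 2, k => by
      have := two_E_le k
      simpa [E, Nat.add_comm] using this
  | 3, k => by
      have := three_E_le k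
      simpa [E, Nat.add_comm] using this
  | 4, k => by
      have h1 := two_E_le k
      have h2 : 2 * E (k+2) ≤ E (k+4) := two_E_le (k+2)
      show 4 * E k ≤ E (4 + k)
      have hm : E (k + 4) = E (4 + k) := by rw [Nat.add_comm]
      omega
  | (j+5), k => by
      have h1 : E (j+2) * E k ≤ E (j+2+k) := E_mul_le (j+2) k
      have h2 : 3 * E (j+2+k) ≤ E (j+2+k+3) := three_E_le (j+2+k)
      have h3 : E (j+5) = 3 * E (j+2) := E_five j
      have h4 : E (j+2+k+3) = E (j+5+k) := by ring_nf
      calc E (j+5) * E k = 3 * (E (j+2) * E k) := by rw [h3]; ring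
        _ ≤ 3 * E (j+2+k) := by omega
        _ ≤ E (j+2+k+3) := h2
        _ = E (j+5+k) := h4

lemma E_add_le_of_le (j k : ℕ) (hj : 1 ≤ j) (hjk : j ≤ k) : E j + E k ≤ E (j+k) := by
  rcases Nat.lt_or_ge j 2 with h | h
  · interval_cases j
    rcases Nat.exists_eq_add_of_le hjk with ⟨m, rfl⟩
    have h2 : E (m+1) + 1 ≤ E (m+2) := E_succ_add_one m
    have he : E 1 = 1 := rfl
    have hc1 : E (1 + m) = E (m+1) := by rw [Nat.add_comm]
    have hc2 : E (1 + (1 + m)) = E (m+2) := by ring_nf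
    omega
  · have h1 : E j ≤ E k := E_mono hjk
    have h2 : 2 * E k ≤ E (k+2) := two_E_le k
    have h3 : E (k+2) ≤ E (j+k) := E_mono (by omega)
    omega

lemma E_add_le (j k : ℕ) (hj : 1 ≤ j) (hk : 1 ≤ k) : E j + E k ≤ E (j+k) := by
  rcases le_or_gt j k with h | h
  · exact E_add_le_of_le j k hj h
  · have h2 := E_add_le_of_le k j hk (le_of_lt h)
    have h3 : E (k + j) = E (j + k) := by rw [Nat.add_comm]
    omega

lemma hasCpx_pos {m k : ℕ} (h : HasCpx m k) : 1 ≤ m ∧ 1 ≤ k := by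
  induction h with
  | one => exact ⟨le_refl 1, le_refl 1⟩
  | add _ _ ih1 ih2 => omega
  | mul _ _ ih1 ih2 => exact ⟨Nat.mul_pos ih1.1 ih2.1, by omega⟩

lemma hasCpx_le_E {m k : ℕ} (h : HasCpx m k) : m ≤ E k := by
  induction h with
  | one => exact le_refl 1
  | @add a b j k h1 h2 ih1 ih2 =>
      have hj := (hasCpx_pos h1).2
      have hk := (hasCpx_pos h2).2
      have := E_add_le j k hj hk
      omega
  | @mul a b j k h1 h2 ih1 ih2 =>
      calc a * b ≤ E j * E k := Nat.mul_le_mul ih1 ih2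
        _ ≤ E (j + k) := E_mul_le j k

lemma hasCpx_self (m : ℕ) (hm : 1 ≤ m) : HasCpx m m := by
  induction m with
  | zero => omega
  | succ k ih =>
      rcases Nat.eq_or_lt_of_le hm with h | h
      · rw [← h]; exact HasCpx.one
      · exact HasCpx.add (ih (by omega)) HasCpx.one

lemma cpx_spec (m : ℕ) (hm : 1 ≤ m) : HasCpx m (cpx m) :=
  Nat.sInf_mem ⟨m, hasCpx_self m hm⟩

lemma cpx_le {m k : ℕ} (h : HasCpx m k) : cpx m ≤ k := Nat.sInf_le h

lemma hasCpx_one_eq' {m k : ℕ} (h : HasCpx m k) (hk : k = 1) : m = 1 := by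
  induction h with
  | one => rfl
  | add h1 h2 => have := (hasCpx_pos h1).2; have := (hasCpx_pos h2).2; omega
  | mul h1 h2 => have := (hasCpx_pos h1).2; have := (hasCpx_pos h2).2; omega

lemma hasCpx_one_eq {m : ℕ} (h : HasCpx m 1) : m = 1 := hasCpx_one_eq' h rfl

lemma cpx_one : cpx 1 = 1 :=
  le_antisymm (cpx_le HasCpx.one) (hasCpx_pos (cpx_spec 1 le_rfl)).2

lemma cpx_two : cpx 2 = 2 := by
  refine le_antisymm (cpx_le (HasCpx.add HasCpx.one HasCpx.one)) ?_
  have h := cpx_spec 2 (by norm_num)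
  have h1 := (hasCpx_pos h).2
  by_contra hlt
  push_neg at hlt
  have h2 : cpx 2 = 1 := by omega
  rw [h2] at h
  exact absurd (hasCpx_one_eq h) (by norm_num)

lemma cpx_double (q : ℕ) (hq : 1 ≤ q) : cpx (2 * q) ≤ cpx q + 2 := by
  have := cpx_le (HasCpx.mul (cpx_spec 2 (by norm_num)) (cpx_spec q hq))
  rw [cpx_two] at this
  omega

lemma cpx_double_succ (q : ℕ) (hq : 1 ≤ q) : cpx (2 * q + 1) ≤ cpx q + 3 := by
  have h1 := cpx_le (HasCpx.add (cpx_spec (2*q) (by omega)) (cpx_spec 1 le_rfl))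
  rw [cpx_one] at h1
  have := cpx_double q hq
  omega

open Real in
lemma cpx_le_logb : ∀ m : ℕ, 2 ≤ m → (cpx m : ℝ) ≤ 3 * Real.logb 2 m := by
  intro m
  induction m using Nat.strong_induction_on with
  | _ m ih =>
    intro hm
    rcases Nat.lt_or_ge m 4 with h4 | h4
    · interval_cases m
      · rw [cpx_two]
        rw [show ((2:ℕ):ℝ) = (2:ℝ) by norm_num, Real.logb_self_eq_one (by norm_num)]
        norm_num
      · have hc : cpx 3 ≤ 3 := cpx_le (hasCpx_self 3 (by norm_num))
        have hl : (1:ℝ) ≤ Real.logb 2 3 := by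
          rw [show (1:ℝ) = Real.logb 2 2 from (Real.logb_self_eq_one (by norm_num)).symm]
          exact Real.logb_le_logb_of_le (by norm_num) (by norm_num) (by norm_num)
        have : (cpx 3 : ℝ) ≤ 3 := by exact_mod_cast hc
        push_cast
        nlinarith
    · obtain ⟨q, hq⟩ : ∃ q, m / 2 = q := ⟨_, rfl⟩
      have hq2 : 2 ≤ q := by omega
      have hqm : q < m := by omega
      have ihq := ih q hqm hq2
      have hcq : cpx m ≤ cpx q + 3 := by
        rcases Nat.even_or_odd m with ⟨r, hr⟩ | ⟨r, hr⟩
        · have hme : m = 2 * q := by omega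
          rw [hme]
          have := cpx_double q (by omega)
          omega
        · have hmo : m = 2 * q + 1 := by omega
          rw [hmo]
          exact cpx_double_succ q (by omega)
      have hlog : Real.logb 2 q + 1 ≤ Real.logb 2 m := by
        have h2q : (2:ℝ) * q ≤ m := by
          have : 2 * q ≤ m := by omega
          exact_mod_cast this
        have hmul : Real.logb 2 ((2:ℝ) * q) = 1 + Real.logb 2 q := by
          rw [Real.logb_mul (by norm_num) (by positivity), Real.logb_self_eq_one (by norm_num)]
        have := Real.logb_le_logb_of_le (b := 2) (by norm_num) (x := (2:ℝ)*q) (by positivity) h2q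
        linarith
      have : (cpx m : ℝ) ≤ (cpx q : ℝ) + 3 := by exact_mod_cast hcq
      nlinarith

lemma le_rpow_of_pow_le {a b : ℝ} (h : a^(3:ℕ) ≤ (3:ℝ)^(b*3)) :
    a ≤ (3:ℝ) ^ b := by
  have h3 : (0:ℝ) < 3 ^ b := Real.rpow_pos_of_pos (by norm_num) b
  have heq : (3:ℝ)^(b*3) = ((3:ℝ)^b)^(3:ℕ) := by
    rw [← Real.rpow_natCast ((3:ℝ)^b) 3, ← Real.rpow_mul (by norm_num)]
    norm_num
  rw [heq] at h
  exact le_of_pow_le_pow_left₀ (by norm_num) (le_of_lt h3) h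

lemma E_le_rpow : ∀ k : ℕ, (E k : ℝ) ≤ (3:ℝ) ^ ((k:ℝ)/3)
  | 0 => by norm_num [E]
  | 1 => by
      apply le_rpow_of_pow_le
      push_cast
      rw [show (1:ℝ)/3*3 = ((1:ℕ):ℝ) by norm_num, Real.rpow_natCast]
      norm_num [E]
  | 2 => by
      apply le_rpow_of_pow_le
      push_cast
      rw [show (2:ℝ)/3*3 = ((2:ℕ):ℝ) by norm_num, Real.rpow_natCast]
      norm_num [E]
  | 3 => by
      apply le_rpow_of_pow_le
      push_cast
      rw [show (3:ℝ)/3*3 = ((3:ℕ):ℝ) by norm_num, Real.rpow_natCast]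
      norm_num [E]
  | 4 => by
      apply le_rpow_of_pow_le
      push_cast
      rw [show (4:ℝ)/3*3 = ((4:ℕ):ℝ) by norm_num, Real.rpow_natCast]
      norm_num [E]
  | (k+5) => by
      have ih := E_le_rpow (k+2)
      have h1 : E (k+5) = 3 * E (k+2) := E_five k
      have h2 : ((k:ℝ)+5)/3 = ((k:ℝ)+2)/3 + 1 := by ring
      have h3 : (3:ℝ) ^ (((k:ℝ)+5)/3) = 3 ^ (((k:ℝ)+2)/3) * 3 := by
        rw [h2, Real.rpow_add (by norm_num), Real.rpow_one]
      push_cast [h1]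
      push_cast at ih
      rw [h3]
      nlinarith

/-- For `n ≥ 2`, `kMax n ≤ 2·n^β` where `β = log 3 / log 2 - 1`. -/
theorem kMax_le_two_rpow (n : ℕ) (hn : 2 ≤ n) :
    (kMax n : ℝ) ≤ 2 * (n : ℝ) ^ (Real.log 3 / Real.log 2 - 1) := by
  set γ := Real.log 3 / Real.log 2 with hγ
  have hγ0 : 0 ≤ γ :=
    div_nonneg (Real.log_nonneg (by norm_num)) (Real.log_nonneg (by norm_num))
  have hn1 : 1 ≤ n - 1 := by omega
  have hcp : HasCpx (n-1) (cpx (n-1)) := cpx_spec _ hn1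
  have hE : n - 1 ≤ E (cpx (n-1)) := hasCpx_le_E hcp
  have h0 : (0:ℕ) ∈ {t : ℕ | t ≤ cpx (n - 1) / 2 ∧ n ≤ E t + E (cpx (n - 1) - t)} := by
    refine ⟨Nat.zero_le _, ?_⟩
    have h1 : E 0 = 1 := rfl
    have h2 : cpx (n-1) - 0 = cpx (n-1) := by omega
    rw [h2, h1]
    omega
  have hbdd : BddAbove {t : ℕ | t ≤ cpx (n - 1) / 2 ∧ n ≤ E t + E (cpx (n - 1) - t)} :=
    ⟨cpx (n-1) / 2, fun t ht => ht.1⟩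
  obtain ⟨ht1, ht2⟩ : te n ≤ cpx (n-1) / 2 ∧ n ≤ E (te n) + E (cpx (n-1) - te n) :=
    Nat.sSup_mem ⟨0, h0⟩ hbdd
  have htc : te n ≤ cpx (n-1) - te n := by omega
  have hEt : E (te n) ≤ E (cpx (n-1) - te n) := E_mono htc
  have hsum : te n + (cpx (n-1) - te n) = cpx (n-1) := by omega
  have hkey : n * E (te n) ≤ 2 * E (cpx (n-1)) := by
    calc n * E (te n) ≤ (2 * E (cpx (n-1) - te n)) * E (te n) :=
          Nat.mul_le_mul_right _ (by omega)
      _ = 2 * (E (te n) * E (cpx (n-1) - te n)) := by ring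
      _ ≤ 2 * E (te n + (cpx (n-1) - te n)) := by
          have := E_mul_le (te n) (cpx (n-1) - te n); omega
      _ = 2 * E (cpx (n-1)) := by rw [hsum]
  have hEc : (E (cpx (n-1)) : ℝ) ≤ (n:ℝ) ^ γ := by
    rcases eq_or_lt_of_le hn with h2 | h3
    · rw [← h2]
      have hc1 : cpx (2-1) = 1 := cpx_one
      rw [hc1]
      have hE1 : (E 1 : ℝ) = 1 := by norm_num [E]
      rw [hE1]
      calc (1:ℝ) = ((2:ℕ):ℝ) ^ (0:ℝ) := (Real.rpow_zero _).symm
        _ ≤ ((2:ℕ):ℝ) ^ γ := by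
            apply (Real.rpow_le_rpow_left_iff (by norm_num)).2 hγ0
    · have hm2 : 2 ≤ n - 1 := by omega
      have hlog := cpx_le_logb (n-1) hm2
      have hE3 := E_le_rpow (cpx (n-1))
      have hexp : ((cpx (n-1)):ℝ)/3 ≤ Real.logb 2 ((n-1:ℕ):ℝ) := by linarith
      have h1 : (3:ℝ) ^ (((cpx (n-1)):ℝ)/3) ≤ (3:ℝ) ^ (Real.logb 2 ((n-1:ℕ):ℝ)) :=
        (Real.rpow_le_rpow_left_iff (by norm_num)).2 hexp
      have hpos : (0:ℝ) < ((n-1:ℕ):ℝ) := by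
        have : (1:ℝ) ≤ ((n-1:ℕ):ℝ) := by exact_mod_cast hn1
        linarith
      have h2' : (3:ℝ) ^ (Real.logb 2 ((n-1:ℕ):ℝ)) = ((n-1:ℕ):ℝ) ^ γ := by
        rw [Real.rpow_def_of_pos (show (0:ℝ) < 3 by norm_num),
            Real.rpow_def_of_pos hpos, Real.logb, hγ]
        congr 1
        ring
      have h3' : ((n-1:ℕ):ℝ) ^ γ ≤ (n:ℝ) ^ γ := by
        apply Real.rpow_le_rpow (by positivity) _ hγ0
        exact_mod_cast Nat.sub_le n 1
      linarith
  have hn0 : (0:ℝ) < (n:ℝ) := by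
    have : (2:ℝ) ≤ (n:ℝ) := by exact_mod_cast hn
    linarith
  have hcast : (n:ℝ) * (E (te n) : ℝ) ≤ 2 * (E (cpx (n-1)) : ℝ) := by exact_mod_cast hkey
  have hfin : (n:ℝ) * (E (te n) : ℝ) ≤ 2 * ((n:ℝ) ^ γ) := by linarith
  show (E (te n) : ℝ) ≤ 2 * (n:ℝ) ^ (γ - 1)
  rw [Real.rpow_sub hn0, Real.rpow_one, ← mul_div_assoc]
  rw [le_div_iff₀ hn0]
  linarith
end

section
/- Let b ≥ 2 be an integer, let A_b = Σ_{d=0}^{b−1} 3^(D(b,d)/3) (a real number), and assume A_b > b. Set α = −1 + log(A_b)/log(b). Then there exists a constant C > 0 such that for every integer N ≥ 2, Σ_{n=2}^{N} 3^(‖n−1‖/3) / n ≤ C · N^α, where the powers are real powers and log is the natural logarithm. -/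
/-- The digit cost `D b r`: the least `c` such that `‖b·n + r‖ ≤ ‖n‖ + c` for
every positive integer `n`. -/
noncomputable def D (b r : ℕ) : ℕ :=
  sInf {c : ℕ | ∀ n : ℕ, 1 ≤ n → cpx (b * n + r) ≤ cpx n + c}

open Finset

theorem sum_Ico_mul_eq_sum_sum {M : Type*} [AddCommMonoid M] (g : ℕ → M) (b lo hi : ℕ) :
    ∑ n ∈ Ico (b * lo) (b * hi), g n = ∑ m ∈ Ico lo hi, ∑ d ∈ range b, g (b * m + d) := by
  rcases le_or_gt lo hi with h | h
  · induction hi, h using Nat.le_induction with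
    | base => simp
    | succ hi hlo ih =>
      rw [sum_Ico_succ_top hlo, ← ih, mul_add_one,
        ← sum_Ico_consecutive _ (Nat.mul_le_mul_left b hlo) (Nat.le_add_right _ _),
        sum_Ico_eq_sum_range (m := b * hi), Nat.add_sub_cancel_left]
  · rw [Ico_eq_empty_of_le h.le, Ico_eq_empty_of_le (Nat.mul_le_mul_left b h.le)]
    simp

theorem sum_Ico_eq_sum_range_sum_Ico {M : Type*} [AddCommMonoid M] (g : ℕ → M) {a : ℕ → ℕ}
    (ha : Monotone a) (n : ℕ) :
    ∑ i ∈ Ico (a 0) (a n), g i = ∑ j ∈ range n, ∑ i ∈ Ico (a j) (a (j + 1)), g i := by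
  induction n with
  | zero => simp
  | succ n ih =>
    rw [sum_range_succ, ← ih, sum_Ico_consecutive _ (ha n.zero_le) (ha n.le_succ)]

theorem le_div_sub_one_mul_pow_of_le_mul_add {u : ℕ → ℝ} {a c : ℝ} (ha : 1 < a) (hc : 0 ≤ c)
    (h0 : u 0 ≤ 0) (hu : ∀ k, u (k + 1) ≤ a * u k + c) (k : ℕ) :
    u k ≤ c / (a - 1) * a ^ k := by
  have ha1 : a - 1 ≠ 0 := by linarith
  -- `u + c / (a - 1)` grows at most geometrically with ratio `a`
  have key : u k + c / (a - 1) ≤ c / (a - 1) * a ^ k := by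
    induction k with
    | zero => simpa using h0
    | succ k ih =>
      calc u (k + 1) + c / (a - 1) ≤ a * (u k + c / (a - 1)) := by
            have : a * (c / (a - 1)) = c + c / (a - 1) := by field_simp; ring
            linarith [hu k]
        _ ≤ a * (c / (a - 1) * a ^ k) := by gcongr
        _ = c / (a - 1) * a ^ (k + 1) := by ring
  have : 0 ≤ c / (a - 1) := div_nonneg hc (by linarith)
  linarith

theorem geom_sum_le_pow_div_sub_one {x : ℝ} (hx : 1 < x) (n : ℕ) :
    ∑ i ∈ range n, x ^ i ≤ x ^ n / (x - 1) := by
  rw [geom_sum_eq hx.ne' n]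
  gcongr
  linarith

theorem Real.rpow_neg_one_add_log_div_log {b A : ℝ} (hb : 1 < b) (hA : 0 < A) :
    b ^ (-1 + Real.log A / Real.log b) = A / b := by
  have hb0 : 0 < b := by linarith
  rw [Real.rpow_add hb0, Real.rpow_neg_one, Real.rpow_def_of_pos hb0,
    mul_div_cancel₀ _ (Real.log_pos hb).ne', Real.exp_log hA, inv_mul_eq_div]

theorem HasCpx.add_ones {a j : ℕ} (h : HasCpx a j) : ∀ r, HasCpx (a + r) (j + r)
  | 0 => h
  | r + 1 => by exact (h.add_ones r).add .one

theorem hasCpx_self_s16 {n : ℕ} (hn : 1 ≤ n) : HasCpx n n := by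
  obtain ⟨m, rfl⟩ := Nat.exists_eq_add_of_le hn
  exact HasCpx.one.add_ones m

theorem cpx_le_of_hasCpx {n k : ℕ} (h : HasCpx n k) : cpx n ≤ k := Nat.sInf_le h

theorem hasCpx_cpx {n : ℕ} (hn : 1 ≤ n) : HasCpx n (cpx n) :=
  Nat.sInf_mem ⟨n, hasCpx_self_s16 hn⟩

theorem cpx_mul_add_le_add_D {b : ℕ} (hb : 1 ≤ b) (r : ℕ) {n : ℕ} (hn : 1 ≤ n) :
    cpx (b * n + r) ≤ cpx n + D b r := by
  refine Nat.sInf_mem (s := {c | ∀ n, 1 ≤ n → cpx (b * n + r) ≤ cpx n + c}) ?_ n hn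
  refine ⟨b + r, fun n hn => ?_⟩
  have := cpx_le_of_hasCpx (((hasCpx_self_s16 hb).mul (hasCpx_cpx hn)).add_ones r)
  omega

noncomputable def cpxRpow (n : ℕ) : ℝ := (3 : ℝ) ^ ((cpx n : ℝ) / 3)

noncomputable def digitCostSum (b : ℕ) : ℝ := ∑ d ∈ range b, (3 : ℝ) ^ ((D b d : ℝ) / 3)

theorem cpxRpow_pos (n : ℕ) : 0 < cpxRpow n := Real.rpow_pos_of_pos (by norm_num) _

theorem cpxRpow_mul_add_le {b : ℕ} (hb : 1 ≤ b) (r : ℕ) {m : ℕ} (hm : 1 ≤ m) :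
    cpxRpow (b * m + r) ≤ (3 : ℝ) ^ ((D b r : ℝ) / 3) * cpxRpow m := by
  have h : (cpx (b * m + r) : ℝ) ≤ cpx m + D b r := by exact_mod_cast cpx_mul_add_le_add_D hb r hm
  rw [cpxRpow, cpxRpow, ← Real.rpow_add (by norm_num)]
  exact Real.rpow_le_rpow_of_exponent_le (by norm_num) (by linarith)

theorem sum_cpxRpow_Ico_pow_succ_le {b : ℕ} (hb : 1 ≤ b) (k : ℕ) :
    ∑ n ∈ Ico 1 (b ^ (k + 1)), cpxRpow n ≤
      digitCostSum b * ∑ n ∈ Ico 1 (b ^ k), cpxRpow n + ∑ n ∈ Ico 1 b, cpxRpow n := by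
  have hdigits := sum_Ico_mul_eq_sum_sum cpxRpow b 1 (b ^ k)
  rw [mul_one, ← pow_succ'] at hdigits
  rw [← sum_Ico_consecutive _ hb (Nat.le_self_pow k.succ_ne_zero b), add_comm, hdigits,
    sum_comm, digitCostSum, sum_mul]
  simp only [mul_sum]
  gcongr with d _ m hm
  exact cpxRpow_mul_add_le hb d (mem_Ico.1 hm).1

theorem sum_cpxRpow_Ico_pow_le {b : ℕ} (hb : 1 ≤ b) (hA : 1 < digitCostSum b) (k : ℕ) :
    ∑ n ∈ Ico 1 (b ^ k), cpxRpow n ≤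
      (∑ n ∈ Ico 1 b, cpxRpow n) / (digitCostSum b - 1) * digitCostSum b ^ k :=
  le_div_sub_one_mul_pow_of_le_mul_add (u := fun k => ∑ n ∈ Ico 1 (b ^ k), cpxRpow n) hA
    (sum_nonneg fun n _ => (cpxRpow_pos n).le) (by simp) (sum_cpxRpow_Ico_pow_succ_le hb) k

theorem sum_cpxRpow_div_Ico_pow_le {b : ℕ} (hb : 1 ≤ b) {C : ℝ}
    (hC : ∀ k, ∑ n ∈ Ico 1 (b ^ k), cpxRpow n ≤ C * digitCostSum b ^ k) (j : ℕ) :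
    ∑ m ∈ Ico (b ^ j) (b ^ (j + 1)), cpxRpow m / (m + 1) ≤
      C * digitCostSum b * (digitCostSum b / b) ^ j := by
  calc ∑ m ∈ Ico (b ^ j) (b ^ (j + 1)), cpxRpow m / (m + 1)
      ≤ ∑ m ∈ Ico (b ^ j) (b ^ (j + 1)), cpxRpow m / b ^ j := by
        gcongr with m hm
        · exact (cpxRpow_pos m).le
        · have : b ^ j ≤ m := (mem_Ico.1 hm).1
          exact_mod_cast this.trans m.le_succ
    _ ≤ (∑ n ∈ Ico 1 (b ^ (j + 1)), cpxRpow n) / b ^ j := by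
        rw [← sum_div]
        gcongr
        · exact fun n _ _ => (cpxRpow_pos n).le
        · exact Nat.one_le_pow _ _ hb
    _ ≤ C * digitCostSum b ^ (j + 1) / b ^ j := by gcongr; exact hC _
    _ = C * digitCostSum b * (digitCostSum b / b) ^ j := by rw [div_pow]; field_simp; ring

theorem exists_sum_cpxRpow_div_Ico_pow_le {b : ℕ} (hb : 2 ≤ b) (hA : (b : ℝ) < digitCostSum b) :
    ∃ C, 0 < C ∧ ∀ K, ∑ m ∈ Ico 1 (b ^ (K + 1)), cpxRpow m / (m + 1) ≤
      C * (digitCostSum b / b) ^ K := by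
  set A := digitCostSum b
  have hb0 : (0 : ℝ) < b := by positivity
  have hA1 : 1 < A := by linarith [(Nat.one_lt_cast (α := ℝ)).2 hb]
  have hρ : 1 < A / b := (one_lt_div hb0).2 hA
  set c := (∑ n ∈ Ico 1 b, cpxRpow n) / (A - 1)
  have hc : 0 < c := div_pos (sum_pos (fun n _ => cpxRpow_pos n) ⟨1, by simp; omega⟩) (by linarith)
  refine ⟨c * A * (A / b) / (A / b - 1), by positivity, fun K => ?_⟩
  calc ∑ m ∈ Ico 1 (b ^ (K + 1)), cpxRpow m / (m + 1)
      = ∑ j ∈ range (K + 1), ∑ m ∈ Ico (b ^ j) (b ^ (j + 1)), cpxRpow m / (m + 1) := by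
        simpa using sum_Ico_eq_sum_range_sum_Ico (fun m : ℕ => cpxRpow m / (m + 1))
          (pow_right_monotone (by omega : 1 ≤ b)) (K + 1)
    _ ≤ ∑ j ∈ range (K + 1), c * A * (A / b) ^ j :=
        sum_le_sum fun j _ => sum_cpxRpow_div_Ico_pow_le (by omega)
          (sum_cpxRpow_Ico_pow_le (by omega) hA1) j
    _ ≤ c * A * ((A / b) ^ (K + 1) / (A / b - 1)) := by
        rw [← mul_sum]; gcongr; exact geom_sum_le_pow_div_sub_one hρ _
    _ = c * A * (A / b) / (A / b - 1) * (A / b) ^ K := by ring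

theorem sum_Icc_two_cpx_sub_one_div (M : ℕ) :
    ∑ n ∈ Icc 2 (M + 1), (3 : ℝ) ^ ((cpx (n - 1) : ℝ) / 3) / (n : ℝ) =
      ∑ m ∈ Ico 1 (M + 1), cpxRpow m / (m + 1) := by
  rw [← Ico_add_one_right_eq_Icc, ← sum_Ico_add' _ 1 (M + 1) 1]
  simp [cpxRpow]

/-- Let `b ≥ 2`, `A_b = ∑_{d<b} 3^(D(b,d)/3)`, and suppose `A_b > b`.  With
`α = -1 + log A_b / log b`, there is `C > 0` with
`∑_{n=2}^{N} 3^(‖n-1‖/3)/n ≤ C·N^α` for all `N ≥ 2`. -/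
theorem sum_rpow_div_le (b : ℕ) (hb : 2 ≤ b)
    (hA : (b : ℝ) < ∑ d ∈ Finset.range b, (3 : ℝ) ^ ((D b d : ℝ) / 3)) :
    ∃ C : ℝ, 0 < C ∧ ∀ N : ℕ, 2 ≤ N →
      ∑ n ∈ Finset.Icc 2 N, (3 : ℝ) ^ ((cpx (n - 1) : ℝ) / 3) / (n : ℝ) ≤
        C * (N : ℝ) ^
          (-1 + Real.log (∑ d ∈ Finset.range b, (3 : ℝ) ^ ((D b d : ℝ) / 3)) /
            Real.log b) := by
  change (b : ℝ) < digitCostSum b at hA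
  obtain ⟨C, hC, hW⟩ := exists_sum_cpxRpow_div_Ico_pow_le hb hA
  change ∃ C : ℝ, 0 < C ∧ ∀ N : ℕ, 2 ≤ N → _ ≤ C * (N : ℝ) ^
    (-1 + Real.log (digitCostSum b) / Real.log b)
  set A := digitCostSum b
  have hb1 : (1 : ℝ) < b := by exact_mod_cast hb
  have hbα : (b : ℝ) ^ (-1 + Real.log A / Real.log b) = A / b :=
    Real.rpow_neg_one_add_log_div_log hb1 (by linarith)
  have hα : 0 ≤ -1 + Real.log A / Real.log b := by
    rw [le_neg_add_iff_add_le, add_zero, one_le_div (Real.log_pos hb1)]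
    exact Real.log_le_log (by linarith) hA.le
  refine ⟨C, hC, fun N hN => ?_⟩
  obtain ⟨M, rfl⟩ : ∃ M, N = M + 1 := ⟨N - 1, by omega⟩
  rw [sum_Icc_two_cpx_sub_one_div]
  set K := Nat.log b M
  calc ∑ m ∈ Ico 1 (M + 1), cpxRpow m / (m + 1)
      ≤ ∑ m ∈ Ico 1 (b ^ (K + 1)), cpxRpow m / (m + 1) :=
        sum_le_sum_of_subset_of_nonneg (Ico_subset_Ico_right (Nat.lt_pow_succ_log_self hb M))
          fun m _ _ => div_nonneg (cpxRpow_pos m).le (by positivity)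
    _ ≤ C * (A / b) ^ K := hW K
    _ = C * ((b : ℝ) ^ K) ^ (-1 + Real.log A / Real.log b) := by
        rw [← hbα, Real.rpow_pow_comm (by positivity)]
    _ ≤ C * ((M + 1 : ℕ) : ℝ) ^ (-1 + Real.log A / Real.log b) := by
        gcongr
        exact_mod_cast (Nat.pow_log_le_self b (by omega)).trans M.le_succ
end
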